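/- Let H₁(x,y) = 81(xy − 1)/(4(x−1)³(y−1)³) be the generating function of the discrete harmonic function of the tandem walk. Then for all real x > 0 and y > 0: lim_{μ→0⁺} μ⁵ · H₁(e^{−μx}, e^{−μy}) = −81(x+y)/(4x³y³) = −(27/4)·L(h₁)(x,y), where L(h₁)(x,y) = 3(x+y)/(x³y³) is the Laplace transform of the continuous harmonic function of the scaling limit of the tandem walk. In particular, the discrete harmonic generating function converges, after scaling by μ⁵ = μ^{k·π/θ + 2n} with k = n = 1 and π/θ = 3, to a nonzero multiple of the continuous one. -/

import Mathlib

/-! Substituting `a = e^{-μx}`, `b = e^{-μy}` turns `μ⁵ H₁(a, b)` into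
`(81/4) · ((ab - 1)/μ) · (μ/(a - 1))³ · (μ/(b - 1))³`, and since `ab = e^{-μ(x+y)}` each factor
is a difference quotient of the exponential at `0`: the limits are `-(x+y)`, `-1/x` and `-1/y`. -/

open Filter Topology

lemma tendsto_exp_neg_mul_sub_one_div (c : ℝ) :
    Tendsto (fun μ : ℝ => (Real.exp (-μ * c) - 1) / μ) (𝓝[≠] 0) (𝓝 (-c)) := by
  have hderiv : HasDerivAt (fun μ : ℝ => Real.exp (-μ * c)) (-c) 0 := by
    simpa using ((hasDerivAt_id (0 : ℝ)).neg.mul_const c).exp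
  refine (hasDerivAt_iff_tendsto_slope.mp hderiv).congr fun μ => ?_
  simp [slope_def_field]

lemma tendsto_div_exp_neg_mul_sub_one {c : ℝ} (hc : c ≠ 0) :
    Tendsto (fun μ : ℝ => μ / (Real.exp (-μ * c) - 1)) (𝓝[≠] 0) (𝓝 (-c)⁻¹) := by
  simpa only [inv_div] using (tendsto_exp_neg_mul_sub_one_div c).inv₀ (neg_ne_zero.mpr hc)

lemma exp_neg_mul_sub_one_ne_zero {μ c : ℝ} (hμ : μ ≠ 0) (hc : c ≠ 0) :
    Real.exp (-μ * c) - 1 ≠ 0 := by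
  rw [sub_ne_zero, Ne, Real.exp_eq_one_iff]
  simp [hμ, hc]

lemma pow_five_mul_div_eq {μ a b : ℝ} (hμ : μ ≠ 0) (ha : a - 1 ≠ 0) (hb : b - 1 ≠ 0) :
    μ ^ 5 * (81 * (a * b - 1) / (4 * (a - 1) ^ 3 * (b - 1) ^ 3)) =
      81 / 4 * ((a * b - 1) / μ) * (μ / (a - 1)) ^ 3 * (μ / (b - 1)) ^ 3 := by
  field_simp

theorem tandem_convergence_harmonic
    (H₁ : ℝ → ℝ → ℝ)
    (hH₁ : ∀ a b : ℝ, H₁ a b = 81 * (a * b - 1) / (4 * (a - 1) ^ 3 * (b - 1) ^ 3))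
    (Lh₁ : ℝ → ℝ → ℝ)
    (hLh₁ : ∀ x y : ℝ, Lh₁ x y = 3 * (x + y) / (x ^ 3 * y ^ 3))
    (x y : ℝ) (hx : 0 < x) (hy : 0 < y) :
    Tendsto (fun μ : ℝ => μ ^ 5 * H₁ (Real.exp (-μ * x)) (Real.exp (-μ * y)))
        (𝓝[>] 0) (𝓝 (-81 * (x + y) / (4 * x ^ 3 * y ^ 3))) ∧
      -81 * (x + y) / (4 * x ^ 3 * y ^ 3) = -(27 / 4) * Lh₁ x y := by
  refine ⟨?_, by rw [hLh₁]; field_simp; ring⟩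
  have hlim := (((tendsto_exp_neg_mul_sub_one_div (x + y)).const_mul (81 / 4)).mul
    ((tendsto_div_exp_neg_mul_sub_one hx.ne').pow 3)).mul
    ((tendsto_div_exp_neg_mul_sub_one hy.ne').pow 3)
  have hvalue : 81 / 4 * -(x + y) * (-x)⁻¹ ^ 3 * (-y)⁻¹ ^ 3 =
      -81 * (x + y) / (4 * x ^ 3 * y ^ 3) := by
    field_simp
  rw [hvalue] at hlim
  refine (hlim.mono_left (nhdsGT_le_nhdsNE 0)).congr' ?_
  filter_upwards [self_mem_nhdsWithin] with μ (hμ : 0 < μ)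
  rw [hH₁, pow_five_mul_div_eq hμ.ne' (exp_neg_mul_sub_one_ne_zero hμ.ne' hx.ne')
    (exp_neg_mul_sub_one_ne_zero hμ.ne' hy.ne'), ← Real.exp_add, neg_mul, neg_mul, neg_mul,
    ← neg_add, ← mul_add]
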